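/- Let X be a random vector in ℝ^p with distribution N(0, Σ), Σ positive definite, let α ∈ ℝ^p be nonzero, α₀ ∈ ℝ, and let w be a real random variable with the standard logistic distribution, independent of X. Define the binary treatment T = 1{α₀ + αᵀX + w > 0} and γ = (αᵀ Σ α)^{1/2}. Then E[X · T] = C Σ α, where C = γ^{−1} E_w[φ((−α₀ − w)/γ)] > 0 and φ is the standard normal density; equivalently, Σ⁻¹ E[X T] = C α with C > 0. -/

import Mathlib

open MeasureTheory ProbabilityTheory Matrix

/-- A random vector `X` is centered multivariate Gaussian `N(0, Σ)` iff every linear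
functional `cᵀX` is a centered real Gaussian with variance `cᵀ Σ c`. -/
def IsCenteredGaussianVector {Ω : Type*} [MeasurableSpace Ω] (μ : Measure Ω)
    {p : ℕ} (X : Ω → Fin p → ℝ) (S : Matrix (Fin p) (Fin p) ℝ) : Prop :=
  ∀ c : Fin p → ℝ,
    Measure.map (fun ω => ∑ i, c i * X ω i) μ =
      gaussianReal 0 (Real.toNNReal (c ⬝ᵥ S.mulVec c))

/-- The standard normal probability density function `φ`. -/
noncomputable def stdNormalPDF (u : ℝ) : ℝ :=
  (Real.sqrt (2 * Real.pi))⁻¹ * Real.exp (-u ^ 2 / 2)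

open Real Filter Set Topology
open scoped NNReal ENNReal

/-!
Write `Z = αᵀX`. Integrating out `w` first, and using `P(w > -t) = σ(t)` for the logistic
sigmoid `σ`, gives `E[T X] = E[σ(α₀ + Z) X]`. If `cᵀΣα = 0`, the law `N(0, αᵀΣα + t² cᵀΣc)`
of `Z + t cᵀX` is even in `t`; differentiating `t ↦ E[G(Z + t cᵀX)]` at `0`, for `G' = σ(α₀ + ·)`,
gives `E[σ(α₀ + Z) cᵀX] = 0`. Hence `E[σ(α₀ + Z) X] = E[σ(α₀ + Z) Z] Σα / (αᵀΣα)`. Finally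
`E[σ(α₀ + Z) Z] = E[T Z]`, and integrating out `Z` first, `E[1{Z > a} Z] = γ φ(a / γ)`.
-/

lemma hasDerivAt_gaussianPDFReal_zero (v : ℝ≥0) (x : ℝ) :
    HasDerivAt (gaussianPDFReal 0 v) (-(x / v) * gaussianPDFReal 0 v x) x := by
  have hexp : HasDerivAt (fun x : ℝ => -x ^ 2 / (2 * v)) (-(x / v)) x := by
    refine ((hasDerivAt_pow 2 x).neg.div_const (2 * (v : ℝ))).congr_deriv ?_
    rcases eq_or_ne (v : ℝ) 0 with hv | hv
    · simp [hv]
    · field_simp; ring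
  simp only [gaussianPDFReal_def, sub_zero]
  exact (hexp.exp.const_mul (√(2 * π * v))⁻¹).congr_deriv (by ring)

lemma tendsto_gaussianPDFReal_atTop (v : ℝ≥0) :
    Tendsto (gaussianPDFReal 0 v) atTop (𝓝 0) := by
  rcases eq_or_ne v 0 with rfl | hv
  · rw [gaussianPDFReal_zero_var]; exact tendsto_const_nhds
  have h : Tendsto (fun x : ℝ => -x ^ 2 / (2 * v)) atTop atBot := by
    simp_rw [neg_div]
    exact tendsto_neg_atTop_atBot.comp
      ((tendsto_pow_atTop two_ne_zero).atTop_div_const (by positivity))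
  simp only [gaussianPDFReal_def, sub_zero]
  have := (tendsto_exp_atBot.comp h).const_mul (√(2 * π * v))⁻¹
  rwa [mul_zero] at this

lemma integrable_mul_gaussianPDFReal_zero (v : ℝ≥0) :
    Integrable (fun x => x * gaussianPDFReal 0 v x) := by
  rcases eq_or_ne v 0 with rfl | hv
  · simp
  have h := (integrable_mul_exp_neg_mul_sq (b := (2 * v : ℝ)⁻¹) (by positivity)).const_mul
    (√(2 * π * v))⁻¹
  refine h.congr (.of_forall fun x => ?_)
  simp only [gaussianPDFReal, sub_zero]
  rw [neg_div, div_eq_inv_mul, ← neg_mul]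
  ring

lemma setIntegral_Ioi_id_gaussianReal {v : ℝ≥0} (hv : v ≠ 0) (a : ℝ) :
    ∫ x in Ioi a, x ∂gaussianReal 0 v = v * gaussianPDFReal 0 v a := by
  have hderiv (x : ℝ) (_ : x ∈ Ici a) :
      HasDerivAt (fun x => -v * gaussianPDFReal 0 v x) (x * gaussianPDFReal 0 v x) x := by
    refine ((hasDerivAt_gaussianPDFReal_zero v x).const_mul _).congr_deriv ?_
    field_simp [NNReal.coe_ne_zero.2 hv]
  have htend := (tendsto_gaussianPDFReal_atTop v).const_mul (-(v : ℝ))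
  rw [mul_zero] at htend
  rw [← integral_indicator measurableSet_Ioi, integral_gaussianReal_eq_integral_smul hv]
  simp_rw [smul_eq_mul, ← indicator_mul_right _ (gaussianPDFReal 0 v),
    mul_comm (gaussianPDFReal 0 v _)]
  rw [integral_indicator measurableSet_Ioi, integral_Ioi_of_hasDerivAt_of_tendsto' hderiv
    (integrable_mul_gaussianPDFReal_zero v).integrableOn htend]
  ring

lemma sq_mul_gaussianPDFReal_eq_mul_stdNormalPDF {γ : ℝ} (hγ : 0 < γ) (a : ℝ) :
    (γ ^ 2).toNNReal * gaussianPDFReal 0 (γ ^ 2).toNNReal a = γ * stdNormalPDF (a / γ) := by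
  rw [gaussianPDFReal, stdNormalPDF, Real.coe_toNNReal _ (sq_nonneg γ), sub_zero,
    Real.sqrt_mul (by positivity), Real.sqrt_sq hγ.le, div_pow]
  field_simp

@[fun_prop]
lemma continuous_stdNormalPDF : Continuous stdNormalPDF := by
  unfold stdNormalPDF; fun_prop

lemma measureReal_Ioi_neg_eq_sigmoid {ν : Measure ℝ} [IsProbabilityMeasure ν]
    (hν : ∀ t, ν (Iic t) = ENNReal.ofReal (1 / (1 + exp (-t)))) (t : ℝ) :
    ν.real (Ioi (-t)) = sigmoid t := by
  rw [← compl_Iic, probReal_compl_eq_one_sub measurableSet_Iic, measureReal_def, hν,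
    ENNReal.toReal_ofReal (by positivity), one_div, ← sigmoid_def, sigmoid_neg, sub_sub_cancel]

lemma integral_ite_pos_add_eq_sigmoid {ν : Measure ℝ} [IsProbabilityMeasure ν]
    (hν : ∀ t, ν (Iic t) = ENNReal.ofReal (1 / (1 + exp (-t)))) (s : ℝ) :
    ∫ u, (if 0 < s + u then (1 : ℝ) else 0) ∂ν = sigmoid s := by
  rw [← measureReal_Ioi_neg_eq_sigmoid hν, ← integral_indicator_one measurableSet_Ioi]
  congr 1 with u
  simp [indicator_apply, neg_lt_iff_pos_add']

lemma Function.Even.eq_zero_of_hasDerivAt_zero {ψ : ℝ → ℝ} {D : ℝ} (hψ : Function.Even ψ)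
    (h : HasDerivAt ψ D 0) : D = 0 := by
  have h' : HasDerivAt ψ (-D) 0 := by
    have := HasDerivAt.comp_const_sub (0 : ℝ) 0 (by simpa using h)
    simpa [hψ _] using this
  linarith [h.unique h']

lemma exists_hasDerivAt_lipschitzWith {g : ℝ → ℝ} (hg : Continuous g) {K : ℝ≥0}
    (hgK : ∀ z, ‖g z‖ ≤ K) : ∃ G : ℝ → ℝ, (∀ z, HasDerivAt G (g z) z) ∧ LipschitzWith K G := by
  have hG (z : ℝ) : HasDerivAt (fun z => ∫ u in (0 : ℝ)..z, g u) (g z) z :=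
    (hg.integral_hasStrictDerivAt 0 z).hasDerivAt
  refine ⟨_, hG, lipschitzWith_of_nnnorm_deriv_le (fun z => (hG z).differentiableAt) fun z => ?_⟩
  rw [(hG z).deriv, ← NNReal.coe_le_coe, coe_nnnorm]
  exact hgK z

lemma Matrix.IsSymm.dotProduct_mulVec_comm {n R : Type*} [Fintype n] [CommSemiring R]
    {S : Matrix n n R} (hS : S.IsSymm) (a c : n → R) : a ⬝ᵥ S *ᵥ c = c ⬝ᵥ S *ᵥ a := by
  rw [dotProduct_mulVec, ← mulVec_transpose, hS.eq, dotProduct_comm]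

section Probability

variable {Ω : Type*} [MeasurableSpace Ω] {μ : Measure Ω}

lemma integral_stdNormalPDF_comp_pos [IsProbabilityMeasure μ] {f : Ω → ℝ}
    (hf : AEMeasurable f μ) :
    0 < ∫ ω, stdNormalPDF (f ω) ∂μ := by
  simp only [stdNormalPDF, integral_const_mul]
  refine mul_pos (by positivity) (integral_exp_pos ?_)
  refine (integrable_const (1 : ℝ)).mono' (by fun_prop) (.of_forall fun ω => ?_)
  rw [Real.norm_of_nonneg (exp_pos _).le, exp_le_one_iff]
  nlinarith [sq_nonneg (f ω)]

lemma aemeasurable_of_map_eq_gaussianReal {Z : Ω → ℝ} {m : ℝ} {v : ℝ≥0}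
    (h : μ.map Z = gaussianReal m v) : AEMeasurable Z μ :=
  .of_map_ne_zero (h ▸ IsProbabilityMeasure.ne_zero _)

lemma integrable_of_map_eq_gaussianReal {Z : Ω → ℝ} {m : ℝ} {v : ℝ≥0}
    (h : μ.map Z = gaussianReal m v) : Integrable Z μ := by
  have hid : Integrable id (gaussianReal m v) :=
    (memLp_id_gaussianReal 1).integrable le_rfl
  rw [← h] at hid
  exact (integrable_map_measure aestronglyMeasurable_id
    (aemeasurable_of_map_eq_gaussianReal h)).1 hid

section Independence

variable {α β E : Type*} [MeasurableSpace α] [MeasurableSpace β] [NormedAddCommGroup E]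
  [IsFiniteMeasure μ] {X : Ω → α} {Y : Ω → β} {F : α × β → E}

lemma ProbabilityTheory.IndepFun.integrable_comp_prodMk_iff (h : IndepFun X Y μ)
    (hX : AEMeasurable X μ) (hY : AEMeasurable Y μ)
    (hF : AEStronglyMeasurable F ((μ.map X).prod (μ.map Y))) :
    Integrable (fun ω => F (X ω, Y ω)) μ ↔ Integrable F ((μ.map X).prod (μ.map Y)) := by
  rw [← (indepFun_iff_map_prod_eq_prod_map_map hX hY).1 h] at hF ⊢
  exact (integrable_map_measure hF (hX.prodMk hY)).symm

lemma ProbabilityTheory.IndepFun.integral_comp_prodMk [NormedSpace ℝ E] (h : IndepFun X Y μ)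
    (hX : AEMeasurable X μ) (hY : AEMeasurable Y μ)
    (hF : AEStronglyMeasurable F ((μ.map X).prod (μ.map Y))) :
    ∫ ω, F (X ω, Y ω) ∂μ = ∫ z, F z ∂((μ.map X).prod (μ.map Y)) := by
  rw [← (indepFun_iff_map_prod_eq_prod_map_map hX hY).1 h] at hF ⊢
  exact (integral_map (hX.prodMk hY) hF).symm

end Independence

lemma integral_ite_pos_add_mul_eq_integral_sigmoid_mul [IsProbabilityMeasure μ] {E : Type*}
    [MeasurableSpace E] {V : Ω → E} {w : Ω → ℝ} (hV : AEMeasurable V μ) (hw : Measurable w)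
    (hwlaw : ∀ t : ℝ, μ {ω | w ω ≤ t} = ENNReal.ofReal (1 / (1 + exp (-t))))
    (hVw : IndepFun V w μ) {s f : E → ℝ} (hs : Measurable s) (hf : Measurable f)
    (hfV : Integrable (fun ω => f (V ω)) μ) :
    ∫ ω, (if 0 < s (V ω) + w ω then (1 : ℝ) else 0) * f (V ω) ∂μ =
      ∫ ω, sigmoid (s (V ω)) * f (V ω) ∂μ := by
  have := Measure.isProbabilityMeasure_map (μ := μ) hw.aemeasurable
  have hν (t : ℝ) : μ.map w (Iic t) = ENNReal.ofReal (1 / (1 + exp (-t))) := by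
    rw [Measure.map_apply hw measurableSet_Iic]; exact hwlaw t
  set F : E × ℝ → ℝ := fun q => (if 0 < s q.1 + q.2 then (1 : ℝ) else 0) * f q.1
  have hFm : Measurable F :=
    (Measurable.ite (measurableSet_lt measurable_const
      ((hs.comp measurable_fst).add measurable_snd)) measurable_const measurable_const).mul
      (hf.comp measurable_fst)
  have hFint : Integrable (fun ω => F (V ω, w ω)) μ :=
    hfV.norm.mono' (hFm.comp_aemeasurable (hV.prodMk hw.aemeasurable)).aestronglyMeasurable
      (.of_forall fun ω => by simp only [F]; split_ifs <;> simp)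
  calc ∫ ω, F (V ω, w ω) ∂μ
      = ∫ x, ∫ u, F (x, u) ∂(μ.map w) ∂(μ.map V) := by
        rw [hVw.integral_comp_prodMk hV hw.aemeasurable hFm.aestronglyMeasurable, integral_prod]
        exact (hVw.integrable_comp_prodMk_iff hV hw.aemeasurable hFm.aestronglyMeasurable).1 hFint
    _ = ∫ x, sigmoid (s x) * f x ∂(μ.map V) := by
        congr 1 with x
        simp only [F, integral_mul_const, integral_ite_pos_add_eq_sigmoid hν]
    _ = ∫ ω, sigmoid (s (V ω)) * f (V ω) ∂μ :=
        integral_map hV ((continuous_sigmoid.measurable.comp hs).mul hf).aestronglyMeasurable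

lemma integral_ite_pos_add_mul_eq_mul_integral_stdNormalPDF [IsProbabilityMeasure μ]
    {Z w : Ω → ℝ} (hw : AEMeasurable w μ) {γ : ℝ} (hγ : 0 < γ)
    (hZ : μ.map Z = gaussianReal 0 (γ ^ 2).toNNReal) (hZw : IndepFun Z w μ) (c : ℝ) :
    ∫ ω, (if 0 < c + Z ω + w ω then (1 : ℝ) else 0) * Z ω ∂μ =
      γ * ∫ ω, stdNormalPDF ((-c - w ω) / γ) ∂μ := by
  have hZm := aemeasurable_of_map_eq_gaussianReal hZ
  have hv : (γ ^ 2).toNNReal ≠ 0 := by simp [hγ.ne']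
  set F : ℝ × ℝ → ℝ := fun q => (if 0 < c + q.1 + q.2 then (1 : ℝ) else 0) * q.1
  have hFm : Measurable F :=
    (Measurable.ite (measurableSet_lt measurable_const ((measurable_const.add measurable_fst).add
      measurable_snd)) measurable_const measurable_const).mul measurable_fst
  have hFint : Integrable (fun ω => F (Z ω, w ω)) μ :=
    (integrable_of_map_eq_gaussianReal hZ).norm.mono'
      (hFm.comp_aemeasurable (hZm.prodMk hw)).aestronglyMeasurable
      (.of_forall fun ω => by simp only [F]; split_ifs <;> simp)
  have hinner (u : ℝ) : ∫ z, F (z, u) ∂(μ.map Z) = γ * stdNormalPDF ((-c - u) / γ) := by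
    rw [hZ, ← sq_mul_gaussianPDFReal_eq_mul_stdNormalPDF hγ,
      ← setIntegral_Ioi_id_gaussianReal hv, ← integral_indicator measurableSet_Ioi]
    congr 1 with z
    have hiff : -c - u < z ↔ 0 < c + z + u := by constructor <;> intro <;> linarith
    simp only [F, indicator_apply, mem_Ioi, hiff, ite_mul, one_mul, zero_mul]
  calc ∫ ω, F (Z ω, w ω) ∂μ
      = ∫ u, ∫ z, F (z, u) ∂(μ.map Z) ∂(μ.map w) := by
        rw [hZw.integral_comp_prodMk hZm hw hFm.aestronglyMeasurable, integral_prod_symm]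
        exact (hZw.integrable_comp_prodMk_iff hZm hw hFm.aestronglyMeasurable).1 hFint
    _ = γ * ∫ ω, stdNormalPDF ((-c - w ω) / γ) ∂μ := by
        simp only [hinner, integral_const_mul]
        have hφ : Continuous fun u => stdNormalPDF ((-c - u) / γ) := by fun_prop
        rw [integral_map hw hφ.aestronglyMeasurable]

lemma integrable_ite_pos_mul {r f : Ω → ℝ} (hr : AEMeasurable r μ) (hf : Integrable f μ) :
    Integrable (fun ω => (if 0 < r ω then (1 : ℝ) else 0) * f ω) μ := by
  refine hf.bdd_mul (c := 1) ?_ (.of_forall fun ω => by split_ifs <;> simp)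
  exact ((Measurable.ite measurableSet_Ioi measurable_const measurable_const).comp_aemeasurable
    hr).aestronglyMeasurable

lemma integral_mul_eq_zero_of_even [IsFiniteMeasure μ] {Z Y : Ω → ℝ} (hZ : Integrable Z μ)
    (hY : Integrable Y μ) {G g : ℝ → ℝ} {K : ℝ≥0} (hG : ∀ z, HasDerivAt G (g z) z)
    (hGK : LipschitzWith K G) (hg : Measurable g)
    (heven : Function.Even fun t => ∫ ω, G (Z ω + t * Y ω) ∂μ) :
    ∫ ω, g (Z ω) * Y ω ∂μ = 0 := by
  have hGZ : Integrable (fun ω => G (Z ω + 0 * Y ω)) μ := by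
    refine ((integrable_const |G 0|).add (hZ.abs.const_mul K)).mono'
      (hGK.continuous.comp_aestronglyMeasurable (by simpa using hZ.1)) (.of_forall fun ω => ?_)
    have := hGK.dist_le_mul (Z ω) 0
    rw [Real.dist_eq, Real.dist_eq, sub_zero] at this
    rw [zero_mul, add_zero, Real.norm_eq_abs, Pi.add_apply]
    linarith [abs_sub_abs_le_abs_sub (G (Z ω)) (G 0)]
  have hlip (ω : Ω) :
      LipschitzOnWith (Real.nnabs (K * |Y ω|)) (fun t => G (Z ω + t * Y ω)) univ := by
    refine (LipschitzWith.of_dist_le_mul fun t s => ?_).lipschitzOnWith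
    rw [Real.coe_nnabs, abs_of_nonneg (by positivity)]
    calc dist (G (Z ω + t * Y ω)) (G (Z ω + s * Y ω))
        ≤ K * dist (Z ω + t * Y ω) (Z ω + s * Y ω) := hGK.dist_le_mul _ _
      _ = K * |Y ω| * dist t s := by
        rw [Real.dist_eq, Real.dist_eq, mul_assoc, ← abs_mul]; ring_nf
  have hderiv (ω : Ω) : HasDerivAt (fun t => G (Z ω + t * Y ω)) (g (Z ω) * Y ω) 0 := by
    have hlin : HasDerivAt (fun t : ℝ => Z ω + t * Y ω) (Y ω) 0 := by
      simpa using ((hasDerivAt_id (0 : ℝ)).mul_const (Y ω)).const_add (Z ω)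
    have hG0 : HasDerivAt G (g (Z ω)) ((fun t : ℝ => Z ω + t * Y ω) 0) := by
      simpa using hG (Z ω)
    exact hG0.comp 0 hlin
  obtain ⟨-, hψ⟩ := hasDerivAt_integral_of_dominated_loc_of_lip (x₀ := 0) univ_mem
    (.of_forall fun t => hGK.continuous.comp_aestronglyMeasurable (hZ.1.add (hY.1.const_mul t)))
    hGZ ((hg.comp_aemeasurable hZ.1.aemeasurable).mul hY.1.aemeasurable).aestronglyMeasurable
    (.of_forall hlip) (hY.abs.const_mul K) (.of_forall hderiv)
  exact heven.eq_zero_of_hasDerivAt_zero hψ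

namespace IsCenteredGaussianVector

variable {p : ℕ} {X : Ω → Fin p → ℝ} {S : Matrix (Fin p) (Fin p) ℝ}

lemma map_dotProduct (hX : IsCenteredGaussianVector μ X S) (c : Fin p → ℝ) :
    μ.map (fun ω => c ⬝ᵥ X ω) = gaussianReal 0 (c ⬝ᵥ S *ᵥ c).toNNReal :=
  hX c

lemma integrable_dotProduct (hX : IsCenteredGaussianVector μ X S) (c : Fin p → ℝ) :
    Integrable (fun ω => c ⬝ᵥ X ω) μ :=
  integrable_of_map_eq_gaussianReal (hX.map_dotProduct c)

lemma integrable_apply (hX : IsCenteredGaussianVector μ X S) (i : Fin p) :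
    Integrable (fun ω => X ω i) μ := by
  simpa using hX.integrable_dotProduct (Pi.single i 1)

lemma aemeasurable (hX : IsCenteredGaussianVector μ X S) : AEMeasurable X μ :=
  aemeasurable_pi_lambda _ fun i => (hX.integrable_apply i).1.aemeasurable

lemma integral_comp_dotProduct_mul_dotProduct_eq_zero [IsProbabilityMeasure μ]
    (hX : IsCenteredGaussianVector μ X S) (hS : S.IsSymm)
    {a c : Fin p → ℝ} (hca : c ⬝ᵥ S *ᵥ a = 0) {g : ℝ → ℝ} (hg : Continuous g) {K : ℝ≥0}
    (hgK : ∀ z, ‖g z‖ ≤ K) :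
    ∫ ω, g (a ⬝ᵥ X ω) * (c ⬝ᵥ X ω) ∂μ = 0 := by
  obtain ⟨G, hG, hGK⟩ := exists_hasDerivAt_lipschitzWith hg hgK
  refine integral_mul_eq_zero_of_even (hX.integrable_dotProduct a) (hX.integrable_dotProduct c)
    hG hGK hg.measurable fun t => ?_
  have hquad (t : ℝ) : (a + t • c) ⬝ᵥ S *ᵥ (a + t • c) = a ⬝ᵥ S *ᵥ a + t ^ 2 * (c ⬝ᵥ S *ᵥ c) := by
    have hac : a ⬝ᵥ S *ᵥ c = 0 := by rw [hS.dotProduct_mulVec_comm, hca]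
    simp only [mulVec_add, mulVec_smul, dotProduct_add, add_dotProduct, dotProduct_smul,
      smul_dotProduct, smul_eq_mul, hac, hca]
    ring
  have hψ (t : ℝ) : ∫ ω, G (a ⬝ᵥ X ω + t * c ⬝ᵥ X ω) ∂μ =
      ∫ x, G x ∂gaussianReal 0 (a ⬝ᵥ S *ᵥ a + t ^ 2 * (c ⬝ᵥ S *ᵥ c)).toNNReal := by
    have hlaw := hX.map_dotProduct (a + t • c)
    simp only [hquad, add_dotProduct, smul_dotProduct, smul_eq_mul] at hlaw
    rw [← hlaw, integral_map (aemeasurable_of_map_eq_gaussianReal hlaw)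
      hGK.continuous.aestronglyMeasurable]
  simp only [hψ, neg_sq]

lemma mul_integral_comp_dotProduct_mul_apply [IsProbabilityMeasure μ]
    (hX : IsCenteredGaussianVector μ X S) (hS : S.IsSymm) {g : ℝ → ℝ} (hg : Continuous g)
    {K : ℝ≥0} (hgK : ∀ z, ‖g z‖ ≤ K) (a : Fin p → ℝ) (i : Fin p) :
    (a ⬝ᵥ S *ᵥ a) * ∫ ω, g (a ⬝ᵥ X ω) * X ω i ∂μ =
      (S *ᵥ a) i * ∫ ω, g (a ⬝ᵥ X ω) * (a ⬝ᵥ X ω) ∂μ := by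
  set c := (a ⬝ᵥ S *ᵥ a) • Pi.single i 1 - (S *ᵥ a) i • a
  have hca : c ⬝ᵥ S *ᵥ a = 0 := by
    simp only [c, sub_dotProduct, smul_dotProduct, single_one_dotProduct, smul_eq_mul]
    ring
  have hgX : AEStronglyMeasurable (fun ω => g (a ⬝ᵥ X ω)) μ :=
    hg.comp_aestronglyMeasurable (hX.integrable_dotProduct a).1
  have hbdd : ∀ᵐ ω ∂μ, ‖g (a ⬝ᵥ X ω)‖ ≤ K := .of_forall fun ω => hgK _
  have h0 := hX.integral_comp_dotProduct_mul_dotProduct_eq_zero hS hca hg hgK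
  have hsplit : (fun ω => g (a ⬝ᵥ X ω) * (c ⬝ᵥ X ω)) = fun ω =>
      (a ⬝ᵥ S *ᵥ a) * (g (a ⬝ᵥ X ω) * X ω i) - (S *ᵥ a) i * (g (a ⬝ᵥ X ω) * (a ⬝ᵥ X ω)) := by
    ext ω
    simp only [c, sub_dotProduct, smul_dotProduct, single_one_dotProduct, smul_eq_mul]
    ring
  rw [hsplit, integral_sub ((hX.integrable_apply i).bdd_mul hgX hbdd |>.const_mul _)
    ((hX.integrable_dotProduct a).bdd_mul hgX hbdd |>.const_mul _), integral_const_mul,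
    integral_const_mul, sub_eq_zero] at h0
  exact h0

lemma mul_integral_ite_pos_mul_apply [IsProbabilityMeasure μ]
    (hX : IsCenteredGaussianVector μ X S) (hS : S.IsSymm) {w : Ω → ℝ} (hw : Measurable w)
    (hwlaw : ∀ t : ℝ, μ {ω | w ω ≤ t} = ENNReal.ofReal (1 / (1 + exp (-t))))
    (hXw : IndepFun X w μ) (a : Fin p → ℝ) (a₀ : ℝ) (i : Fin p) :
    (a ⬝ᵥ S *ᵥ a) * ∫ ω, (if 0 < a₀ + a ⬝ᵥ X ω + w ω then (1 : ℝ) else 0) * X ω i ∂μ =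
      (S *ᵥ a) i * ∫ ω, (if 0 < a₀ + a ⬝ᵥ X ω + w ω then (1 : ℝ) else 0) * (a ⬝ᵥ X ω) ∂μ := by
  have hs : Measurable fun x : Fin p → ℝ => a₀ + a ⬝ᵥ x := by fun_prop
  have hσK (z : ℝ) : ‖sigmoid (a₀ + z)‖ ≤ (1 : ℝ≥0) := by
    simp [abs_of_pos (sigmoid_pos _), sigmoid_le_one]
  rw [integral_ite_pos_add_mul_eq_integral_sigmoid_mul hX.aemeasurable hw hwlaw hXw hs
      (measurable_pi_apply i) (hX.integrable_apply i),
    integral_ite_pos_add_mul_eq_integral_sigmoid_mul hX.aemeasurable hw hwlaw hXw hs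
      (by fun_prop) (hX.integrable_dotProduct a)]
  exact hX.mul_integral_comp_dotProduct_mul_apply hS (by fun_prop) hσK a i

end IsCenteredGaussianVector

end Probability

theorem gaussian_logistic_treatment_first_moment_general
    {Ω : Type*} [MeasurableSpace Ω] (μ : Measure Ω) [IsProbabilityMeasure μ]
    (p : ℕ) (X : Ω → Fin p → ℝ)
    (S : Matrix (Fin p) (Fin p) ℝ) (hS : S.PosDef)
    (hGauss : IsCenteredGaussianVector μ X S)
    (w : Ω → ℝ) (hw : Measurable w)
    (hwlaw : ∀ t : ℝ, μ {ω | w ω ≤ t} = ENNReal.ofReal (1 / (1 + Real.exp (-t))))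
    (hindep : IndepFun X w μ)
    (α : Fin p → ℝ) (hα : α ≠ 0) (α₀ : ℝ)
    (T : Ω → ℝ)
    (hT : T = fun ω => if 0 < α₀ + (∑ i, α i * X ω i) + w ω then (1 : ℝ) else 0)
    (γ C : ℝ) (hγ : γ = Real.sqrt (α ⬝ᵥ S.mulVec α))
    (hC : C = γ⁻¹ * ∫ ω, stdNormalPDF ((-α₀ - w ω) / γ) ∂μ) :
    (∫ ω, T ω • X ω ∂μ) = C • S.mulVec α ∧
    0 < C ∧
    S⁻¹.mulVec (∫ ω, T ω • X ω ∂μ) = C • α := by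
  have hXm := hGauss.aemeasurable
  have hv : 0 < α ⬝ᵥ S *ᵥ α := by simpa using hS.dotProduct_mulVec_pos hα
  have hγpos : 0 < γ := hγ ▸ Real.sqrt_pos.2 hv
  have hγsq : γ ^ 2 = α ⬝ᵥ S *ᵥ α := hγ ▸ Real.sq_sqrt hv.le
  have hTZ : ∫ ω, (if 0 < α₀ + α ⬝ᵥ X ω + w ω then (1 : ℝ) else 0) * (α ⬝ᵥ X ω) ∂μ =
      γ ^ 2 * C := by
    rw [integral_ite_pos_add_mul_eq_mul_integral_stdNormalPDF (Z := (α ⬝ᵥ X ·)) hw.aemeasurable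
      hγpos (hγsq ▸ hGauss.map_dotProduct α)
      (hindep.comp (φ := (α ⬝ᵥ ·)) (by fun_prop) measurable_id), hC]
    field_simp
  have hTX : ∫ ω, T ω • X ω ∂μ = C • S *ᵥ α := by
    ext i
    rw [eval_integral fun j =>
      hT ▸ integrable_ite_pos_mul (by fun_prop) (hGauss.integrable_apply j)]
    have h := hGauss.mul_integral_ite_pos_mul_apply (isHermitian_iff_isSymm.1 hS.1) hw hwlaw
      hindep α α₀ i
    rw [hTZ, ← hγsq] at h
    simp only [hT, Pi.smul_apply, smul_eq_mul]
    exact mul_left_cancel₀ (pow_ne_zero 2 hγpos.ne') (h.trans (by ring))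
  refine ⟨hTX, ?_, ?_⟩
  · rw [hC]
    exact mul_pos (inv_pos.2 hγpos) (integral_stdNormalPDF_comp_pos (by fun_prop))
  · rw [hTX, mulVec_smul, mulVec_mulVec, nonsing_inv_mul S (isUnit_iff_ne_zero.2 hS.det_pos.ne'),
      one_mulVec]

/-- With `X ~ N(0, Σ)` (`Σ` positive definite), `w` standard logistic
independent of `X`, treatment `T = 1{α₀ + αᵀX + w > 0}` and `γ = (αᵀ Σ α)^{1/2}`,
`E[X · T] = C Σ α` where `C = γ⁻¹ E_w[φ((-α₀ - w)/γ)] > 0`; equivalently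
`Σ⁻¹ E[X T] = C α`. -/
theorem gaussian_logistic_treatment_first_moment
    {Ω : Type*} [MeasurableSpace Ω] (μ : Measure Ω) [IsProbabilityMeasure μ]
    (p : ℕ) (X : Ω → Fin p → ℝ) (hX : Measurable X)
    (S : Matrix (Fin p) (Fin p) ℝ) (hS : S.PosDef)
    (hGauss : IsCenteredGaussianVector μ X S)
    (w : Ω → ℝ) (hw : Measurable w)
    (hwlaw : ∀ t : ℝ, μ {ω | w ω ≤ t} = ENNReal.ofReal (1 / (1 + Real.exp (-t))))
    (hindep : IndepFun X w μ)
    (α : Fin p → ℝ) (hα : α ≠ 0) (α₀ : ℝ)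
    (T : Ω → ℝ)
    (hT : T = fun ω => if 0 < α₀ + (∑ i, α i * X ω i) + w ω then (1 : ℝ) else 0)
    (γ C : ℝ) (hγ : γ = Real.sqrt (α ⬝ᵥ S.mulVec α))
    (hC : C = γ⁻¹ * ∫ ω, stdNormalPDF ((-α₀ - w ω) / γ) ∂μ) :
    (∫ ω, T ω • X ω ∂μ) = C • S.mulVec α ∧
    0 < C ∧
    S⁻¹.mulVec (∫ ω, T ω • X ω ∂μ) = C • α :=
  gaussian_logistic_treatment_first_moment_general μ p X S hS hGauss w hw hwlaw hindep α hα α₀ T hT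
    γ C hγ hC
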